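/- Let (X_0,Y_0),…,(X_{n−1},Y_{n−1}) be independent pairs with X_i ∈ {0,1}, and let D_i := X_i ⊕ X_{n−1} for i < n−1. Then PredAdv(X_{n−1} | Y_0,…,Y_{n−1}, D_0,…,D_{n−2}) ≤ 1 − Π_{i=0}^{n−1} (1 − PredAdv(X_i | Y_i)). -/
import Mathlib


open Finset

/-- Maximal bit-prediction advantage of `X` from `Z` for a joint distribution
`P` on `ZMod 2 × Z`: `2 · max_f Pr[f(Z) = X] − 1`. -/
noncomputable def predAdv {Z : Type*} [Fintype Z] (P : ZMod 2 × Z → ℝ) : ℝ :=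
  2 * (⨆ f : Z → ZMod 2, ∑ z, P (f z, z)) - 1

lemma zmod2_cases (b : ZMod 2) : b = 0 ∨ b = 1 := by revert b; decide

lemma zmod2_sum (g : ZMod 2 → ℝ) : ∑ b : ZMod 2, g b = g 0 + g 1 := by
  have h : (Finset.univ : Finset (ZMod 2)) = {0, 1} := by decide
  rw [h]; simp

lemma min_half (a b : ℝ) : min a b = (a + b - |a - b|) / 2 := by
  rcases le_total a b with h|h
  · rw [min_eq_left h, abs_of_nonpos (by linarith)]; ring
  · rw [min_eq_right h, abs_of_nonneg (by linarith)]; ring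

lemma pt (A B u v : ℝ) (hA : 0 ≤ A) (hB : 0 ≤ B) (hu : 0 ≤ u) (hv : 0 ≤ v) :
    |A*u - B*v| + |B*u - A*v| ≤ (A+B)*(u+v) - 4 * (min A B * min u v) := by
  rcases le_total A B with h1|h1 <;> rcases le_total u v with h2|h2 <;>
    [rw [min_eq_left h1, min_eq_left h2]; rw [min_eq_left h1, min_eq_right h2];
     rw [min_eq_right h1, min_eq_left h2]; rw [min_eq_right h1, min_eq_right h2]] <;>
    rcases abs_cases (A*u - B*v) with ⟨e1,_⟩|⟨e1,_⟩ <;>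
    rcases abs_cases (B*u - A*v) with ⟨e2,_⟩|⟨e2,_⟩ <;>
    rw [e1, e2] <;> nlinarith

lemma sum_prod_sh (m : ℕ) (w : Fin m → ZMod 2 → ℝ) (c : ZMod 2) :
    ∑ d : Fin m → ZMod 2, ∏ i, w i (d i + c) = ∏ i, (w i 0 + w i 1) := by
  rw [← Fintype.prod_sum (fun i b => w i (b + c))]
  refine Finset.prod_congr rfl fun i _ => ?_
  rw [zmod2_sum (fun b => w i (b + c))]
  rcases zmod2_cases c with h|h <;> simp [h]
  rw [show ((1:ZMod 2)+1) = 0 by decide]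
  ring

lemma keyS : ∀ (n : ℕ) (w : Fin n → ZMod 2 → ℝ), (∀ i b, 0 ≤ w i b) → ∀ u v : ℝ, 0 ≤ u → 0 ≤ v →
    ∑ d : Fin n → ZMod 2, |(∏ i, w i (d i)) * u - (∏ i, w i (d i + 1)) * v| ≤
      (∏ i, (w i 0 + w i 1)) * (u + v) - (∏ i, (2 * min (w i 0) (w i 1))) * (2 * min u v) := by
  intro n
  induction n with
  | zero =>
    intro w hw u v hu hv
    simp only [Finset.univ_unique, Finset.sum_singleton, Finset.univ_eq_empty,
      Finset.prod_empty, one_mul]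
    rw [min_half u v]
    have := abs_nonneg (u - v)
    linarith
  | succ m ih =>
    intro w hw u v hu hv
    have hAnn : ∀ d : Fin m → ZMod 2, (0:ℝ) ≤ ∏ x : Fin m, w x.succ (d x) :=
      fun d => Finset.prod_nonneg fun i _ => hw _ _
    have hBnn : ∀ d : Fin m → ZMod 2, (0:ℝ) ≤ ∏ x : Fin m, w x.succ (d x + 1) :=
      fun d => Finset.prod_nonneg fun i _ => hw _ _
    have e1 : ∑ d : Fin m → ZMod 2, ∏ x : Fin m, w x.succ (d x)
        = ∏ x : Fin m, (w x.succ 0 + w x.succ 1) := by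
      simpa using sum_prod_sh m (fun i => w i.succ) 0
    have e2 : ∑ d : Fin m → ZMod 2, ∏ x : Fin m, w x.succ (d x + 1)
        = ∏ x : Fin m, (w x.succ 0 + w x.succ 1) := sum_prod_sh m (fun i => w i.succ) 1
    have ihS : ∑ d : Fin m → ZMod 2,
        |(∏ x : Fin m, w x.succ (d x)) * u - (∏ x : Fin m, w x.succ (d x + 1)) * v| ≤
        (∏ x : Fin m, (w x.succ 0 + w x.succ 1)) * (u + v)
          - (∏ x : Fin m, (2 * min (w x.succ 0) (w x.succ 1))) * (2 * min u v) :=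
      ih (fun i => w i.succ) (fun i b => hw _ _) u v hu hv
    have hQnn : (0:ℝ) ≤ ∏ x : Fin m, (2 * min (w x.succ 0) (w x.succ 1)) :=
      Finset.prod_nonneg fun i _ => by
        have := le_min (hw i.succ 0) (hw i.succ 1); linarith
    have hre : ∑ d : Fin (m+1) → ZMod 2, |(∏ i, w i (d i)) * u - (∏ i, w i (d i + 1)) * v|
        = ∑ d : Fin m → ZMod 2,
            (|w 0 0 * ((∏ x : Fin m, w x.succ (d x)) * u)
                - w 0 1 * ((∏ x : Fin m, w x.succ (d x + 1)) * v)|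
            + |w 0 1 * ((∏ x : Fin m, w x.succ (d x)) * u)
                - w 0 0 * ((∏ x : Fin m, w x.succ (d x + 1)) * v)|) := by
      rw [← (Fin.consEquiv (fun _ : Fin (m+1) => ZMod 2)).sum_comp
        (fun d => |(∏ i, w i (d i)) * u - (∏ i, w i (d i + 1)) * v|)]
      rw [Fintype.sum_prod_type]
      rw [zmod2_sum (fun b => ∑ d : Fin m → ZMod 2,
        |(∏ i, w i ((Fin.consEquiv (fun _ : Fin (m+1) => ZMod 2)) (b, d) i)) * u -
         (∏ i, w i ((Fin.consEquiv (fun _ : Fin (m+1) => ZMod 2)) (b, d) i + 1)) * v|)]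
      rw [← Finset.sum_add_distrib]
      refine Finset.sum_congr rfl fun d _ => ?_
      simp only [Fin.consEquiv_apply, Fin.prod_univ_succ, Fin.cons_zero, Fin.cons_succ]
      rw [show ((0:ZMod 2)+1) = 1 by decide, show ((1:ZMod 2)+1) = 0 by decide]
      simp only [mul_assoc]
    rw [hre]
    have hbd : ∀ d : Fin m → ZMod 2,
        |w 0 0 * ((∏ x : Fin m, w x.succ (d x)) * u)
            - w 0 1 * ((∏ x : Fin m, w x.succ (d x + 1)) * v)|
        + |w 0 1 * ((∏ x : Fin m, w x.succ (d x)) * u)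
            - w 0 0 * ((∏ x : Fin m, w x.succ (d x + 1)) * v)|
        ≤ (w 0 0 + w 0 1) * ((∏ x : Fin m, w x.succ (d x)) * u
              + (∏ x : Fin m, w x.succ (d x + 1)) * v)
          - 4 * (min (w 0 0) (w 0 1)
              * min ((∏ x : Fin m, w x.succ (d x)) * u)
                    ((∏ x : Fin m, w x.succ (d x + 1)) * v)) :=
      fun d => pt (w 0 0) (w 0 1) _ _ (hw _ _) (hw _ _)
        (mul_nonneg (hAnn d) hu) (mul_nonneg (hBnn d) hv)
    have hsum1 : ∑ d : Fin m → ZMod 2,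
        ((∏ x : Fin m, w x.succ (d x)) * u + (∏ x : Fin m, w x.succ (d x + 1)) * v)
        = (∏ x : Fin m, (w x.succ 0 + w x.succ 1)) * (u + v) := by
      rw [Finset.sum_add_distrib, ← Finset.sum_mul, ← Finset.sum_mul, e1, e2]; ring
    have hmin : (∏ x : Fin m, (2 * min (w x.succ 0) (w x.succ 1))) * min u v
        ≤ ∑ d : Fin m → ZMod 2,
          min ((∏ x : Fin m, w x.succ (d x)) * u) ((∏ x : Fin m, w x.succ (d x + 1)) * v) := by
      have hrw : ∑ d : Fin m → ZMod 2,
          min ((∏ x : Fin m, w x.succ (d x)) * u) ((∏ x : Fin m, w x.succ (d x + 1)) * v)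
          = ∑ d : Fin m → ZMod 2,
            (((∏ x : Fin m, w x.succ (d x)) * u + (∏ x : Fin m, w x.succ (d x + 1)) * v
              - |(∏ x : Fin m, w x.succ (d x)) * u - (∏ x : Fin m, w x.succ (d x + 1)) * v|)
              / 2) :=
        Finset.sum_congr rfl fun d _ => min_half _ _
      have hsplit : ∑ d : Fin m → ZMod 2,
          (((∏ x : Fin m, w x.succ (d x)) * u + (∏ x : Fin m, w x.succ (d x + 1)) * v
            - |(∏ x : Fin m, w x.succ (d x)) * u - (∏ x : Fin m, w x.succ (d x + 1)) * v|)
            / 2)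
          = ((∑ d : Fin m → ZMod 2,
              ((∏ x : Fin m, w x.succ (d x)) * u + (∏ x : Fin m, w x.succ (d x + 1)) * v))
            - ∑ d : Fin m → ZMod 2,
              |(∏ x : Fin m, w x.succ (d x)) * u - (∏ x : Fin m, w x.succ (d x + 1)) * v|)
            / 2 := by
        rw [← Finset.sum_sub_distrib, Finset.sum_div]
      rw [hrw, hsplit, hsum1]
      rw [show (∏ x : Fin m, (2 * min (w x.succ 0) (w x.succ 1))) * (2 * min u v)
        = 2 * ((∏ x : Fin m, (2 * min (w x.succ 0) (w x.succ 1))) * min u v) by ring] at ihS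
      linarith
    calc ∑ d : Fin m → ZMod 2,
            (|w 0 0 * ((∏ x : Fin m, w x.succ (d x)) * u)
                - w 0 1 * ((∏ x : Fin m, w x.succ (d x + 1)) * v)|
            + |w 0 1 * ((∏ x : Fin m, w x.succ (d x)) * u)
                - w 0 0 * ((∏ x : Fin m, w x.succ (d x + 1)) * v)|)
        ≤ ∑ d : Fin m → ZMod 2,
            ((w 0 0 + w 0 1) * ((∏ x : Fin m, w x.succ (d x)) * u
                + (∏ x : Fin m, w x.succ (d x + 1)) * v)
            - 4 * (min (w 0 0) (w 0 1)
                * min ((∏ x : Fin m, w x.succ (d x)) * u)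
                      ((∏ x : Fin m, w x.succ (d x + 1)) * v))) :=
          Finset.sum_le_sum fun d _ => hbd d
      _ ≤ (∏ i, (w i 0 + w i 1)) * (u + v)
            - (∏ i, (2 * min (w i 0) (w i 1))) * (2 * min u v) := by
        rw [Finset.sum_sub_distrib, ← Finset.mul_sum, ← Finset.mul_sum, ← Finset.mul_sum, hsum1]
        simp only [Fin.prod_univ_succ]
        have h1 : (0:ℝ) ≤ min (w 0 0) (w 0 1) := le_min (hw _ _) (hw _ _)
        have h2 : (0:ℝ) ≤ min u v := le_min hu hv
        nlinarith [mul_le_mul_of_nonneg_left hmin h1, hmin, hQnn]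

lemma sum_eq_01 {Z : Type*} [Fintype Z] (P : ZMod 2 × Z → ℝ) :
    ∑ a, P a = ∑ z, P (0, z) + ∑ z, P (1, z) := by
  rw [Fintype.sum_prod_type, zmod2_sum (fun b => ∑ z, P (b, z))]

lemma two_max_sub (a b : ℝ) : 2 * max a b - (a + b) = |a - b| := by
  rcases le_total a b with h|h
  · rw [max_eq_right h, abs_of_nonpos (by linarith)]; ring
  · rw [max_eq_left h, abs_of_nonneg (by linarith)]; ring

lemma predAdv_le_sum_abs {Z : Type*} [Fintype Z] (P : ZMod 2 × Z → ℝ)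
    (hs : ∑ a, P a = 1) :
    predAdv P ≤ ∑ z, |P (0, z) - P (1, z)| := by
  have h1 : (⨆ f : Z → ZMod 2, ∑ z, P (f z, z)) ≤ ∑ z, max (P (0, z)) (P (1, z)) := by
    refine ciSup_le fun f => Finset.sum_le_sum fun z _ => ?_
    rcases zmod2_cases (f z) with h|h <;> rw [h]
    · exact le_max_left _ _
    · exact le_max_right _ _
  have h2 : ∑ z, P (0, z) + ∑ z, P (1, z) = 1 := by rw [← sum_eq_01]; exact hs
  have h3 : ∑ z, |P (0, z) - P (1, z)|
      = ∑ z, (2 * max (P (0, z)) (P (1, z))) - (∑ z, P (0, z) + ∑ z, P (1, z)) := by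
    rw [← Finset.sum_add_distrib, ← Finset.sum_sub_distrib]
    exact Finset.sum_congr rfl fun z _ => (two_max_sub _ _).symm
  rw [predAdv, h3, h2, ← Finset.mul_sum]
  linarith

lemma sum_abs_le_predAdv {Z : Type*} [Fintype Z] (P : ZMod 2 × Z → ℝ)
    (hs : ∑ a, P a = 1) :
    ∑ z, |P (0, z) - P (1, z)| ≤ predAdv P := by
  classical
  have h2 : ∑ z, P (0, z) + ∑ z, P (1, z) = 1 := by rw [← sum_eq_01]; exact hs
  have h3 : ∑ z, |P (0, z) - P (1, z)|
      = ∑ z, (2 * max (P (0, z)) (P (1, z))) - (∑ z, P (0, z) + ∑ z, P (1, z)) := by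
    rw [← Finset.sum_add_distrib, ← Finset.sum_sub_distrib]
    exact Finset.sum_congr rfl fun z _ => (two_max_sub _ _).symm
  have h1 : ∑ z, max (P (0, z)) (P (1, z)) ≤ ⨆ f : Z → ZMod 2, ∑ z, P (f z, z) := by
    have heq : ∑ z, P ((fun z => if P (0, z) ≤ P (1, z) then (1 : ZMod 2) else 0) z, z)
        = ∑ z, max (P (0, z)) (P (1, z)) := by
      refine Finset.sum_congr rfl fun z _ => ?_
      by_cases h : P (0, z) ≤ P (1, z)
      · simp only [h, if_true]; rw [max_eq_right h]
      · simp only [h, if_false]; rw [max_eq_left (le_of_not_ge h)]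
    rw [← heq]
    exact le_ciSup (f := fun f : Z → ZMod 2 => ∑ z, P (f z, z))
      (Set.Finite.bddAbove (Set.finite_range _))
      (fun z => if P (0, z) ≤ P (1, z) then (1 : ZMod 2) else 0)
  rw [predAdv, h3, h2, ← Finset.mul_sum]
  linarith

lemma predAdv_le_one {Z : Type*} [Fintype Z] (P : ZMod 2 × Z → ℝ)
    (hP : ∀ a, 0 ≤ P a) (hs : ∑ a, P a = 1) :
    predAdv P ≤ 1 := by
  classical
  have h1 : (⨆ f : Z → ZMod 2, ∑ z, P (f z, z)) ≤ 1 := by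
    refine ciSup_le fun f => ?_
    have hinj : Set.InjOn (fun z => (f z, z)) (Finset.univ : Finset Z) := by
      intro a _ b _ h
      exact congrArg Prod.snd h
    have heq : ∑ z, P (f z, z)
        = ∑ a ∈ (Finset.univ : Finset Z).image (fun z => (f z, z)), P a :=
      (Finset.sum_image fun a ha b hb h => hinj ha hb h).symm
    rw [heq, ← hs]
    exact Finset.sum_le_sum_of_subset_of_nonneg (Finset.subset_univ _)
      (fun a _ _ => hP a)
  rw [predAdv]
  linarith

lemma filt_eq (n : ℕ) (b : ZMod 2) (d : Fin n → ZMod 2) :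
    Finset.univ.filter (fun x : Fin (n+1) → ZMod 2 =>
      x (Fin.last n) = b ∧ ∀ i : Fin n, x i.castSucc + x (Fin.last n) = d i)
    = {Fin.snoc (fun i => d i + b) b} := by
  have hb : b + b = 0 := by
    rcases zmod2_cases b with h|h <;> rw [h] <;> decide
  ext x
  simp only [Finset.mem_filter, Finset.mem_univ, true_and, Finset.mem_singleton]
  constructor
  · rintro ⟨h1, h2⟩
    funext i
    refine Fin.lastCases ?_ (fun j => ?_) i
    · rw [Fin.snoc_last]; exact h1
    · rw [Fin.snoc_castSucc]
      have h3 := h2 j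
      rw [h1] at h3
      calc x j.castSucc = x j.castSucc + b + b := by rw [add_assoc, hb, add_zero]
        _ = d j + b := by rw [h3]
  · rintro rfl
    refine ⟨Fin.snoc_last _ _, fun i => ?_⟩
    rw [Fin.snoc_castSucc, Fin.snoc_last, add_assoc, hb, add_zero]

lemma hQval_lemma {n : ℕ} {Y : Fin (n+1) → Type*} [∀ i, Fintype (Y i)]
    (P : ∀ i, ZMod 2 × Y i → ℝ) (b : ZMod 2) (y : ∀ i, Y i) (d : Fin n → ZMod 2) :
    (∑ x ∈ Finset.univ.filter (fun x : Fin (n+1) → ZMod 2 =>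
        x (Fin.last n) = b ∧ ∀ i : Fin n, x i.castSucc + x (Fin.last n) = d i),
      ∏ i, P i (x i, y i))
    = (∏ i : Fin n, P i.castSucc (d i + b, y i.castSucc))
        * P (Fin.last n) (b, y (Fin.last n)) := by
  rw [filt_eq, Finset.sum_singleton, Fin.prod_univ_castSucc]
  simp

/-- For independent pairs `(X_i, Y_i)` (indexed by `Fin (n+1)`) and
`D_i := X_i ⊕ X_n`, the advantage in predicting `X_n` from
`(Y_0, …, Y_n, D_0, …, D_{n−1})` is at most
`1 − ∏ (1 − PredAdv(X_i ∣ Y_i))`. -/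
theorem stmt_8 {n : ℕ} {Y : Fin (n+1) → Type*} [∀ i, Fintype (Y i)]
    (P : ∀ i, ZMod 2 × Y i → ℝ)
    (hP : ∀ i a, 0 ≤ P i a) (hPs : ∀ i, ∑ a, P i a = 1) :
    predAdv (fun a : ZMod 2 × ((∀ i, Y i) × (Fin n → ZMod 2)) =>
        ∑ x ∈ Finset.univ.filter (fun x : Fin (n+1) → ZMod 2 =>
            x (Fin.last n) = a.1 ∧
            ∀ i : Fin n, x i.castSucc + x (Fin.last n) = a.2.2 i),
          ∏ i, P i (x i, a.2.1 i))
      ≤ 1 - ∏ i, (1 - predAdv (P i)) := by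
  classical
  -- abbreviations
  set Q : ZMod 2 × ((∀ i, Y i) × (Fin n → ZMod 2)) → ℝ := fun a =>
      ∑ x ∈ Finset.univ.filter (fun x : Fin (n+1) → ZMod 2 =>
          x (Fin.last n) = a.1 ∧
          ∀ i : Fin n, x i.castSucc + x (Fin.last n) = a.2.2 i),
        ∏ i, P i (x i, a.2.1 i) with hQdef
  have hQval : ∀ (b : ZMod 2) (y : ∀ i, Y i) (d : Fin n → ZMod 2),
      Q (b, (y, d)) = (∏ i : Fin n, P i.castSucc (d i + b, y i.castSucc))
        * P (Fin.last n) (b, y (Fin.last n)) := by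
    intro b y d
    rw [hQdef]
    exact hQval_lemma P b y d
  -- sums of marginals
  have hGs : ∀ i, ∑ y : Y i, (P i (0, y) + P i (1, y)) = 1 := by
    intro i
    rw [Finset.sum_add_distrib, ← sum_eq_01]
    exact hPs i
  -- total mass of Q is 1
  have hA : ∑ y : ∀ i, Y i, ∏ i, (P i (0, y i) + P i (1, y i)) = 1 := by
    rw [← Fintype.prod_sum (fun i y => P i (0, y) + P i (1, y))]
    exact Finset.prod_eq_one fun i _ => hGs i
  have hz : ∀ b : ZMod 2, ∑ z : (∀ i, Y i) × (Fin n → ZMod 2), Q (b, z)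
      = ∑ y : ∀ i, Y i,
          (∏ i : Fin n, (P i.castSucc (0, y i.castSucc) + P i.castSucc (1, y i.castSucc)))
            * P (Fin.last n) (b, y (Fin.last n)) := by
    intro b
    rw [Fintype.sum_prod_type]
    refine Finset.sum_congr rfl fun y _ => ?_
    have h1 : ∀ d : Fin n → ZMod 2, Q (b, (y, d))
        = (∏ i : Fin n, P i.castSucc (d i + b, y i.castSucc))
            * P (Fin.last n) (b, y (Fin.last n)) := fun d => hQval b y d
    rw [Finset.sum_congr rfl fun d _ => h1 d, ← Finset.sum_mul,
      sum_prod_sh n (fun i s => P i.castSucc (s, y i.castSucc)) b]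
  have htot : ∑ a, Q a = 1 := by
    rw [Fintype.sum_prod_type]
    rw [zmod2_sum (fun b => ∑ z : (∀ i, Y i) × (Fin n → ZMod 2), Q (b, z))]
    rw [hz 0, hz 1, ← Finset.sum_add_distrib, ← hA]
    refine Finset.sum_congr rfl fun y _ => ?_
    rw [Fin.prod_univ_castSucc (fun i => P i (0, y i) + P i (1, y i))]
    ring
  -- step 1 : predAdv bound by L1 distance
  have h1 : predAdv Q ≤ ∑ z, |Q (0, z) - Q (1, z)| := predAdv_le_sum_abs Q htot
  -- step 2 : per-y key bound
  have h2 : ∑ z, |Q (0, z) - Q (1, z)|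
      ≤ ∑ y : ∀ i, Y i,
          ((∏ i : Fin n, (P i.castSucc (0, y i.castSucc) + P i.castSucc (1, y i.castSucc)))
              * (P (Fin.last n) (0, y (Fin.last n)) + P (Fin.last n) (1, y (Fin.last n)))
            - (∏ i : Fin n,
                (2 * min (P i.castSucc (0, y i.castSucc)) (P i.castSucc (1, y i.castSucc))))
              * (2 * min (P (Fin.last n) (0, y (Fin.last n)))
                  (P (Fin.last n) (1, y (Fin.last n))))) := by
    rw [Fintype.sum_prod_type]
    refine Finset.sum_le_sum fun y _ => ?_
    have hrw : ∀ d : Fin n → ZMod 2, |Q (0, (y, d)) - Q (1, (y, d))|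
        = |(∏ i : Fin n, P i.castSucc (d i, y i.castSucc))
              * P (Fin.last n) (0, y (Fin.last n))
          - (∏ i : Fin n, P i.castSucc (d i + 1, y i.castSucc))
              * P (Fin.last n) (1, y (Fin.last n))| := by
      intro d
      rw [hQval 0 y d, hQval 1 y d]
      simp
    rw [Finset.sum_congr rfl fun d _ => hrw d]
    exact keyS n (fun i s => P i.castSucc (s, y i.castSucc))
      (fun i s => hP _ _) _ _ (hP _ _) (hP _ _)
  -- step 3 : rewrite the bound
  have h3 : ∑ y : ∀ i, Y i,
          ((∏ i : Fin n, (P i.castSucc (0, y i.castSucc) + P i.castSucc (1, y i.castSucc)))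
              * (P (Fin.last n) (0, y (Fin.last n)) + P (Fin.last n) (1, y (Fin.last n)))
            - (∏ i : Fin n,
                (2 * min (P i.castSucc (0, y i.castSucc)) (P i.castSucc (1, y i.castSucc))))
              * (2 * min (P (Fin.last n) (0, y (Fin.last n)))
                  (P (Fin.last n) (1, y (Fin.last n)))))
      = 1 - ∏ i, ∑ y : Y i, 2 * min (P i (0, y)) (P i (1, y)) := by
    rw [Finset.sum_sub_distrib]
    have e1 : ∑ y : ∀ i, Y i,
        (∏ i : Fin n, (P i.castSucc (0, y i.castSucc) + P i.castSucc (1, y i.castSucc)))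
          * (P (Fin.last n) (0, y (Fin.last n)) + P (Fin.last n) (1, y (Fin.last n))) = 1 := by
      rw [← hA]
      refine Finset.sum_congr rfl fun y _ => ?_
      rw [Fin.prod_univ_castSucc (fun i => P i (0, y i) + P i (1, y i))]
    have e2 : ∑ y : ∀ i, Y i,
        (∏ i : Fin n, (2 * min (P i.castSucc (0, y i.castSucc)) (P i.castSucc (1, y i.castSucc))))
          * (2 * min (P (Fin.last n) (0, y (Fin.last n))) (P (Fin.last n) (1, y (Fin.last n))))
        = ∏ i, ∑ y : Y i, 2 * min (P i (0, y)) (P i (1, y)) := by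
      rw [Fintype.prod_sum (fun i y => 2 * min (P i (0, y)) (P i (1, y)))]
      refine Finset.sum_congr rfl fun y _ => ?_
      rw [Fin.prod_univ_castSucc (fun i => 2 * min (P i (0, y i)) (P i (1, y i)))]
    rw [e1, e2]
  -- step 4 : compare with the advantage product
  have hfac : ∀ i, 1 - predAdv (P i) ≤ ∑ y : Y i, 2 * min (P i (0, y)) (P i (1, y)) := by
    intro i
    have h5 := sum_abs_le_predAdv (P i) (hPs i)
    have h6 : ∑ y : Y i, 2 * min (P i (0, y)) (P i (1, y))
        = 1 - ∑ y : Y i, |P i (0, y) - P i (1, y)| := by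
      rw [← hGs i, ← Finset.sum_sub_distrib]
      refine Finset.sum_congr rfl fun y _ => ?_
      rw [min_half]
      ring
    rw [h6]
    linarith
  have h0 : ∀ i, (0:ℝ) ≤ 1 - predAdv (P i) := by
    intro i
    have := predAdv_le_one (P i) (hP i) (hPs i)
    linarith
  have h4 : ∏ i, (1 - predAdv (P i)) ≤ ∏ i, ∑ y : Y i, 2 * min (P i (0, y)) (P i (1, y)) :=
    Finset.prod_le_prod (fun i _ => h0 i) (fun i _ => hfac i)
  calc predAdv Q ≤ ∑ z, |Q (0, z) - Q (1, z)| := h1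
    _ ≤ _ := h2
    _ = 1 - ∏ i, ∑ y : Y i, 2 * min (P i (0, y)) (P i (1, y)) := h3
    _ ≤ 1 - ∏ i, (1 - predAdv (P i)) := by linarith
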